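/- arXiv:2507.13678 — 3 statements merged into one kernel-verified Lean document; each statement's English description precedes it below -/
import Mathlib

section
/- Abstract Swapping Lemma for downward-closed cluster families: Let A be a finite set and F a family of nonempty subsets of A that is downward closed (if B ∈ F and ∅ ≠ B' ⊆ B then B' ∈ F). Let 𝒞 be an F-partition of A, let 𝒳 ⊆ 𝒞 with U = ⋃𝒳, and let 𝒴 be a collection of pairwise disjoint members of F with union Q = ⋃𝒴 such that U ⊆ Q ⊆ A and |𝒴| ≤ |𝒳|. Then the collection 𝒞' consisting of 𝒴 together with the nonempty sets c \ (Q \ U) for c ∈ 𝒞 \ 𝒳 is an F-partition of A with |𝒞'| ≤ |𝒞|. -/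
/-- An `F`-partition of `S`: a finite collection of pairwise disjoint members
of `F` whose union is `S`. -/
def IsFPartition {β : Type*} [DecidableEq β] (F : Set (Finset β))
    (P : Finset (Finset β)) (S : Finset β) : Prop :=
  (∀ c ∈ P, c ∈ F) ∧ (∀ c ∈ P, ∀ d ∈ P, c ≠ d → Disjoint c d) ∧ P.sup id = S

/-- A family `F` of nonempty subsets is downward closed if every nonempty
subset of a member is again a member. -/
def DownwardClosedFamily {β : Type*} (F : Set (Finset β)) : Prop :=
  ∀ B ∈ F, ∀ B' ⊆ B, B'.Nonempty → B' ∈ F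

/-- **Abstract Swapping Lemma for downward-closed cluster families.**
Let `A` be a finite set, `F` a downward-closed family of nonempty subsets of `A`,
`𝒞` an `F`-partition of `A`, `𝒳 ⊆ 𝒞` with union `U`, and `𝒴` a collection of
pairwise disjoint members of `F` with union `Q`, `U ⊆ Q ⊆ A`, `|𝒴| ≤ |𝒳|`.
Then `𝒞' = 𝒴 ∪ {c \ (Q \ U) ≠ ∅ : c ∈ 𝒞 \ 𝒳}` is an `F`-partition of `A`
with `|𝒞'| ≤ |𝒞|`. -/
theorem abstract_swapping_lemma {β : Type*} [DecidableEq β]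
    (A : Finset β) (F : Set (Finset β))
    (hFne : ∀ B ∈ F, B.Nonempty) (hFsub : ∀ B ∈ F, B ⊆ A)
    (hFdc : DownwardClosedFamily F)
    (𝒞 𝒳 𝒴 : Finset (Finset β))
    (h𝒞 : IsFPartition F 𝒞 A)
    (h𝒳 : 𝒳 ⊆ 𝒞)
    (h𝒴F : ∀ c ∈ 𝒴, c ∈ F)
    (h𝒴disj : ∀ c ∈ 𝒴, ∀ d ∈ 𝒴, c ≠ d → Disjoint c d)
    (hUQ : 𝒳.sup id ⊆ 𝒴.sup id)
    (hQA : 𝒴.sup id ⊆ A)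
    (hcard : 𝒴.card ≤ 𝒳.card) :
    let U : Finset β := 𝒳.sup id
    let Q : Finset β := 𝒴.sup id
    let 𝒞' : Finset (Finset β) :=
      𝒴 ∪ ((𝒞 \ 𝒳).image fun c => c \ (Q \ U)).filter (fun s => s.Nonempty)
    IsFPartition F 𝒞' A ∧ 𝒞'.card ≤ 𝒞.card := by
  intro U Q 𝒞'
  obtain ⟨h𝒞F, h𝒞disj, h𝒞sup⟩ := h𝒞
  have hdisjU : ∀ c ∈ 𝒞, c ∉ 𝒳 → Disjoint c U := by
    intro c hc hcx
    rw [Finset.disjoint_sup_right]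
    intro x hx
    exact h𝒞disj c hc x (h𝒳 hx) (fun h => hcx (h ▸ hx))
  have hmem : ∀ s ∈ 𝒞', s ∈ 𝒴 ∨ ∃ c ∈ 𝒞, c ∉ 𝒳 ∧ s = c \ (Q \ U) ∧ s.Nonempty := by
    intro s hs
    rcases Finset.mem_union.1 hs with h | h
    · exact Or.inl h
    · right
      simp only [Finset.mem_filter, Finset.mem_image, Finset.mem_sdiff] at h
      obtain ⟨⟨c, ⟨hc, hcx⟩, rfl⟩, hne⟩ := h
      exact ⟨c, hc, hcx, rfl, hne⟩
  have hsQ : ∀ c ∈ 𝒞, c ∉ 𝒳 → Disjoint (c \ (Q \ U)) Q := by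
    intro c hc hcx
    rw [Finset.disjoint_left]
    intro x hx hxQ
    rcases Finset.mem_sdiff.1 hx with ⟨hxc, hxnQU⟩
    have hxU : x ∈ U := by
      by_contra hxU
      exact hxnQU (Finset.mem_sdiff.2 ⟨hxQ, hxU⟩)
    exact Finset.disjoint_left.1 (hdisjU c hc hcx) hxc hxU
  have hYQ : ∀ y ∈ 𝒴, y ⊆ Q := fun y hy => Finset.le_sup (f := id) hy
  refine ⟨⟨?_, ?_, ?_⟩, ?_⟩
  · -- members of 𝒞' are in F
    intro s hs
    rcases hmem s hs with h | ⟨c, hc, hcx, rfl, hne⟩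
    · exact h𝒴F s h
    · exact hFdc c (h𝒞F c hc) _ Finset.sdiff_subset hne
  · -- pairwise disjoint
    intro s hs t ht hst
    rcases hmem s hs with hsY | ⟨c, hc, hcx, rfl, hne⟩
    · rcases hmem t ht with htY | ⟨d, hd, hdx, rfl, hne'⟩
      · exact h𝒴disj s hsY t htY hst
      · exact ((hsQ d hd hdx).mono_right (hYQ s hsY)).symm
    · rcases hmem t ht with htY | ⟨d, hd, hdx, rfl, hne'⟩
      · exact (hsQ c hc hcx).mono_right (hYQ t htY)
      · have hcd : c ≠ d := fun h => hst (by rw [h])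
        exact (h𝒞disj c hc d hd hcd).mono Finset.sdiff_subset Finset.sdiff_subset
  · -- union is A
    apply subset_antisymm
    · intro x hx
      obtain ⟨s, hs, hxs⟩ := Finset.mem_sup.1 hx
      rcases hmem s hs with h | ⟨c, hc, hcx, rfl, hne⟩
      · exact ((hYQ s h).trans hQA) hxs
      · exact (Finset.sdiff_subset.trans (hFsub c (h𝒞F c hc))) hxs
    · intro x hxA
      rw [← h𝒞sup] at hxA
      obtain ⟨c, hc, hxc⟩ := Finset.mem_sup.1 hxA
      by_cases hxQ : x ∈ Q
      · obtain ⟨y, hy, hxy⟩ := Finset.mem_sup.1 hxQ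
        exact Finset.mem_sup.2 ⟨y, Finset.mem_union_left _ hy, hxy⟩
      · have hcx : c ∉ 𝒳 := fun h =>
          hxQ (hUQ (Finset.mem_sup.2 ⟨c, h, hxc⟩))
        have hxs : x ∈ c \ (Q \ U) :=
          Finset.mem_sdiff.2 ⟨hxc, fun h => hxQ (Finset.mem_sdiff.1 h).1⟩
        refine Finset.mem_sup.2 ⟨c \ (Q \ U), Finset.mem_union_right _ ?_, hxs⟩
        exact Finset.mem_filter.2 ⟨Finset.mem_image.2 ⟨c, Finset.mem_sdiff.2 ⟨hc, hcx⟩, rfl⟩, ⟨x, hxs⟩⟩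
  · -- cardinality
    have hdisjYI : Disjoint 𝒴 (((𝒞 \ 𝒳).image fun c => c \ (Q \ U)).filter (fun s => s.Nonempty)) := by
      rw [Finset.disjoint_left]
      intro s hsY hsI
      simp only [Finset.mem_filter, Finset.mem_image, Finset.mem_sdiff] at hsI
      obtain ⟨⟨c, ⟨hc, hcx⟩, rfl⟩, x, hx⟩ := hsI
      exact Finset.disjoint_left.1 (hsQ c hc hcx) hx (hYQ _ hsY hx)
    have h1 : 𝒞'.card = 𝒴.card + (((𝒞 \ 𝒳).image fun c => c \ (Q \ U)).filter (fun s => s.Nonempty)).card :=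
      Finset.card_union_of_disjoint hdisjYI
    have h2 : (((𝒞 \ 𝒳).image fun c => c \ (Q \ U)).filter (fun s => s.Nonempty)).card ≤ (𝒞 \ 𝒳).card :=
      (Finset.card_filter_le _ _).trans (Finset.card_image_le)
    have h3 : (𝒞 \ 𝒳).card = 𝒞.card - 𝒳.card := Finset.card_sdiff_of_subset h𝒳
    have h4 : 𝒳.card ≤ 𝒞.card := Finset.card_le_card h𝒳
    omega
end

section
/- Maximal-cluster exchange lemma (optimality core of the BnR algorithm): Let A be a nonempty finite set and F a downward-closed family of nonempty subsets of A that contains every singleton {a} for a ∈ A. Let 𝒞 be any F-partition of A and fix v ∈ A. Then there exist a set M ∈ F with v ∈ M ⊆ A that is maximal among members of F contained in A (i.e., there is no B ∈ F with M ⊊ B ⊆ A), and an F-partition 𝒞' of A with M ∈ 𝒞' and |𝒞'| ≤ |𝒞|. -/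
/-- **Maximal-cluster exchange lemma (optimality core of the BnR algorithm).**
Let `A` be a nonempty finite set and `F` a downward-closed family of nonempty
subsets of `A` containing every singleton. Given any `F`-partition `𝒞` of `A`
and any `v ∈ A`, there exist `M ∈ F` with `v ∈ M ⊆ A`, maximal among members of
`F` contained in `A`, and an `F`-partition `𝒞'` of `A` with `M ∈ 𝒞'` and
`|𝒞'| ≤ |𝒞|`. -/
theorem maximal_cluster_exchange {β : Type*} [DecidableEq β]
    (A : Finset β) (hA : A.Nonempty) (F : Set (Finset β))
    (hFne : ∀ B ∈ F, B.Nonempty) (hFsub : ∀ B ∈ F, B ⊆ A)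
    (hFdc : DownwardClosedFamily F)
    (hFsingle : ∀ a ∈ A, ({a} : Finset β) ∈ F)
    (𝒞 : Finset (Finset β)) (h𝒞 : IsFPartition F 𝒞 A)
    (v : β) (hv : v ∈ A) :
    ∃ M : Finset β, M ∈ F ∧ v ∈ M ∧ M ⊆ A ∧
      (¬ ∃ B ∈ F, M ⊂ B ∧ B ⊆ A) ∧
      ∃ 𝒞' : Finset (Finset β),
        IsFPartition F 𝒞' A ∧ M ∈ 𝒞' ∧ 𝒞'.card ≤ 𝒞.card := by
  classical
  obtain ⟨hF𝒞, hdisj, hsup⟩ := h𝒞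
  -- the block containing v
  have hv' : v ∈ 𝒞.sup id := by rw [hsup]; exact hv
  rw [Finset.mem_sup] at hv'
  obtain ⟨c₀, hc₀, hvc₀⟩ := hv'
  have hc₀F : c₀ ∈ F := hF𝒞 c₀ hc₀
  have hc₀A : c₀ ⊆ A := hFsub c₀ hc₀F
  -- choose M of maximal cardinality among F-members containing c₀
  set T := A.powerset.filter (fun B => B ∈ F ∧ c₀ ⊆ B) with hT
  have hTne : T.Nonempty := ⟨c₀, by simp [hT, hc₀A, hc₀F]⟩
  obtain ⟨M, hMT, hMmax⟩ := T.exists_max_image Finset.card hTne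
  simp only [hT, Finset.mem_filter, Finset.mem_powerset] at hMT
  obtain ⟨hMA, hMF, hc₀M⟩ := hMT
  have hMne : M.Nonempty := hFne M hMF
  refine ⟨M, hMF, hc₀M hvc₀, hMA, ?_, ?_⟩
  · rintro ⟨B, hBF, hMB, hBA⟩
    have hBT : B ∈ T := by
      simp [hT, hBA, hBF]
      exact hc₀M.trans hMB.subset
    have h1 := hMmax B hBT
    have h2 := Finset.card_lt_card hMB
    omega
  · refine ⟨insert M ((𝒞.image (fun c => c \ M)).erase ∅), ⟨?_, ?_, ?_⟩,
      Finset.mem_insert_self _ _, ?_⟩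
    · -- members of F
      intro c hc
      rcases Finset.mem_insert.mp hc with rfl | hc
      · exact hMF
      · obtain ⟨hne, hc⟩ := Finset.mem_erase.mp hc
        obtain ⟨d, hd, rfl⟩ := Finset.mem_image.mp hc
        exact hFdc d (hF𝒞 d hd) _ (Finset.sdiff_subset)
          (Finset.nonempty_iff_ne_empty.mpr hne)
    · -- pairwise disjoint
      intro c hc d hd hne
      rcases Finset.mem_insert.mp hc with rfl | hc <;>
        rcases Finset.mem_insert.mp hd with rfl | hd
      · exact absurd rfl hne
      · obtain ⟨-, hd⟩ := Finset.mem_erase.mp hd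
        obtain ⟨e, he, rfl⟩ := Finset.mem_image.mp hd
        exact Finset.disjoint_sdiff
      · obtain ⟨-, hc⟩ := Finset.mem_erase.mp hc
        obtain ⟨e, he, rfl⟩ := Finset.mem_image.mp hc
        exact Finset.sdiff_disjoint
      · obtain ⟨-, hc⟩ := Finset.mem_erase.mp hc
        obtain ⟨e, he, rfl⟩ := Finset.mem_image.mp hc
        obtain ⟨-, hd⟩ := Finset.mem_erase.mp hd
        obtain ⟨f, hf, rfl⟩ := Finset.mem_image.mp hd
        have hef : e ≠ f := fun h => hne (by rw [h])
        exact (hdisj e he f hf hef).mono Finset.sdiff_subset Finset.sdiff_subset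
    · -- union is A
      apply Finset.Subset.antisymm
      · intro x hx
        rw [Finset.mem_sup] at hx
        obtain ⟨c, hc, hxc⟩ := hx
        rcases Finset.mem_insert.mp hc with rfl | hc
        · exact hMA hxc
        · obtain ⟨-, hc⟩ := Finset.mem_erase.mp hc
          obtain ⟨e, he, rfl⟩ := Finset.mem_image.mp hc
          have : e ⊆ A := hFsub e (hF𝒞 e he)
          exact this (Finset.sdiff_subset hxc)
      · intro x hx
        rw [Finset.mem_sup]
        by_cases hxM : x ∈ M
        · exact ⟨M, Finset.mem_insert_self _ _, hxM⟩
        · have : x ∈ 𝒞.sup id := by rw [hsup]; exact hx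
          rw [Finset.mem_sup] at this
          obtain ⟨c, hc, hxc⟩ := this
          refine ⟨c \ M, Finset.mem_insert_of_mem (Finset.mem_erase.mpr ⟨?_, ?_⟩), ?_⟩
          · intro h
            have : x ∈ c \ M := Finset.mem_sdiff.mpr ⟨hxc, hxM⟩
            rw [h] at this
            exact absurd this (Finset.notMem_empty x)
          · exact Finset.mem_image.mpr ⟨c, hc, rfl⟩
          · exact Finset.mem_sdiff.mpr ⟨hxc, hxM⟩
    · -- cardinality
      have hempty : (∅ : Finset β) ∈ 𝒞.image (fun c => c \ M) := by
        refine Finset.mem_image.mpr ⟨c₀, hc₀, ?_⟩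
        simpa [Finset.sdiff_eq_empty_iff_subset] using hc₀M
      have h1 : ((𝒞.image (fun c => c \ M)).erase ∅).card
          = (𝒞.image (fun c => c \ M)).card - 1 :=
        Finset.card_erase_of_mem hempty
      have h2 : (𝒞.image (fun c => c \ M)).card ≤ 𝒞.card := Finset.card_image_le
      have h3 : 1 ≤ (𝒞.image (fun c => c \ M)).card :=
        Finset.card_pos.mpr ⟨∅, hempty⟩
      calc (insert M ((𝒞.image (fun c => c \ M)).erase ∅)).card
          ≤ ((𝒞.image (fun c => c \ M)).erase ∅).card + 1 :=
            Finset.card_insert_le _ _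
        _ ≤ 𝒞.card := by omega
end

section
/- Correctness of the BnR branching recursion: Let A be a nonempty finite set and F a downward-closed family of nonempty subsets of A containing all singletons. For S ⊆ A let p(S) denote the minimum cardinality of an F-partition of S (with p(∅) = 0). Then for every v ∈ A, p(A) = min { 1 + p(A \ M) : M ∈ F, v ∈ M ⊆ A, and M is maximal among members of F contained in A }. -/
/-- `minParts F S` is the minimum cardinality of an `F`-partition of `S`
(in particular `minParts F ∅ = 0`, witnessed by the empty partition). -/
noncomputable def minParts {β : Type*} [DecidableEq β]
    (F : Set (Finset β)) (S : Finset β) : ℕ :=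
  sInf {p : ℕ | ∃ P : Finset (Finset β), IsFPartition F P S ∧ P.card = p}

lemma singleton_partition {β : Type*} [DecidableEq β] (F : Set (Finset β))
    (A S : Finset β) (hS : S ⊆ A) (hFsingle : ∀ a ∈ A, ({a} : Finset β) ∈ F) :
    IsFPartition F (S.image fun a => ({a} : Finset β)) S := by
  refine ⟨?_, ?_, ?_⟩
  · intro c hc
    obtain ⟨a, ha, rfl⟩ := Finset.mem_image.mp hc
    exact hFsingle a (hS ha)
  · intro c hc d hd hne
    obtain ⟨a, _, rfl⟩ := Finset.mem_image.mp hc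
    obtain ⟨b, _, rfl⟩ := Finset.mem_image.mp hd
    have : a ≠ b := fun h => hne (by rw [h])
    exact Finset.disjoint_singleton.mpr this
  · ext a
    simp [Finset.mem_sup]

lemma minParts_set_nonempty {β : Type*} [DecidableEq β] (F : Set (Finset β))
    (A S : Finset β) (hS : S ⊆ A) (hFsingle : ∀ a ∈ A, ({a} : Finset β) ∈ F) :
    {p : ℕ | ∃ P : Finset (Finset β), IsFPartition F P S ∧ P.card = p}.Nonempty :=
  ⟨_, _, singleton_partition F A S hS hFsingle, rfl⟩

lemma exists_optimal {β : Type*} [DecidableEq β] (F : Set (Finset β))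
    (A S : Finset β) (hS : S ⊆ A) (hFsingle : ∀ a ∈ A, ({a} : Finset β) ∈ F) :
    ∃ P : Finset (Finset β), IsFPartition F P S ∧ P.card = minParts F S :=
  Nat.sInf_mem (minParts_set_nonempty F A S hS hFsingle)

lemma minParts_le_card {β : Type*} [DecidableEq β] {F : Set (Finset β)}
    {P : Finset (Finset β)} {S : Finset β} (h : IsFPartition F P S) :
    minParts F S ≤ P.card :=
  Nat.sInf_le ⟨P, h, rfl⟩

lemma exists_maximal {β : Type*} [DecidableEq β] (F : Set (Finset β))
    (A C : Finset β) (hC : C ∈ F) (hCA : C ⊆ A) :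
    ∃ M ∈ F, C ⊆ M ∧ M ⊆ A ∧ ¬ ∃ B ∈ F, M ⊂ B ∧ B ⊆ A := by
  classical
  let T := A.powerset.filter (fun B => B ∈ F ∧ C ⊆ B)
  have hT : C ∈ T := by simp [T, hC, hCA]
  obtain ⟨M, hM, hmax⟩ := T.exists_max_image Finset.card ⟨C, hT⟩
  simp only [T, Finset.mem_filter, Finset.mem_powerset] at hM
  refine ⟨M, hM.2.1, hM.2.2, hM.1, ?_⟩
  rintro ⟨B, hB, hMB, hBA⟩
  have hBT : B ∈ T := by
    simp only [T, Finset.mem_filter, Finset.mem_powerset]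
    exact ⟨hBA, hB, hM.2.2.trans hMB.subset⟩
  exact absurd (hmax B hBT) (not_le.mpr (Finset.card_lt_card hMB))

lemma upper_bound {β : Type*} [DecidableEq β] (F : Set (Finset β))
    (A M : Finset β) (hM : M ∈ F) (hMA : M ⊆ A)
    (hFsingle : ∀ a ∈ A, ({a} : Finset β) ∈ F) :
    minParts F A ≤ 1 + minParts F (A \ M) := by
  obtain ⟨P, hP, hcard⟩ := exists_optimal F A (A \ M) (Finset.sdiff_subset) hFsingle
  have key : ∀ D ∈ P, Disjoint M D := by
    intro D hD
    have hDs : D ⊆ A \ M := hP.2.2 ▸ Finset.le_sup (f := id) hD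
    exact (Finset.disjoint_sdiff).mono_right hDs
  have hpart : IsFPartition F (insert M P) A := by
    refine ⟨?_, ?_, ?_⟩
    · intro c hc
      rcases Finset.mem_insert.mp hc with rfl | hc
      · exact hM
      · exact hP.1 c hc
    · intro c hc d hd hne
      rcases Finset.mem_insert.mp hc with hc | hc <;>
        rcases Finset.mem_insert.mp hd with hd | hd
      · exact absurd (hc.trans hd.symm) hne
      · rw [hc]; exact key d hd
      · rw [hd]; exact (key c hc).symm
      · exact hP.2.1 c hc d hd hne
    · rw [Finset.sup_insert, hP.2.2]
      exact Finset.union_sdiff_of_subset hMA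
  calc minParts F A ≤ (insert M P).card := minParts_le_card hpart
    _ ≤ P.card + 1 := Finset.card_insert_le _ _
    _ = 1 + minParts F (A \ M) := by omega

lemma lower_bound {β : Type*} [DecidableEq β] (F : Set (Finset β))
    (A : Finset β)
    (hFsub : ∀ B ∈ F, B ⊆ A) (hFdc : DownwardClosedFamily F)
    (hFsingle : ∀ a ∈ A, ({a} : Finset β) ∈ F) (v : β) (hv : v ∈ A) :
    ∃ M ∈ F, v ∈ M ∧ M ⊆ A ∧ (¬ ∃ B ∈ F, M ⊂ B ∧ B ⊆ A) ∧
      1 + minParts F (A \ M) ≤ minParts F A := by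
  classical
  obtain ⟨P, hP, hcard⟩ := exists_optimal F A A subset_rfl hFsingle
  have hvP : v ∈ P.sup id := by rw [hP.2.2]; exact hv
  obtain ⟨C, hCP, hvC⟩ := Finset.mem_sup.mp hvP
  have hCF : C ∈ F := hP.1 C hCP
  obtain ⟨M, hMF, hCM, hMA, hmax⟩ := exists_maximal F A C hCF (hFsub C hCF)
  refine ⟨M, hMF, hCM hvC, hMA, hmax, ?_⟩
  set Q := ((P.erase C).image (fun D => D \ M)).erase ∅ with hQdef
  have hQpart : IsFPartition F Q (A \ M) := by
    refine ⟨?_, ?_, ?_⟩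
    · intro x hx
      obtain ⟨hxne, hx⟩ := Finset.mem_erase.mp hx
      obtain ⟨D, hD, rfl⟩ := Finset.mem_image.mp hx
      exact hFdc D (hP.1 D (Finset.mem_of_mem_erase hD)) _ Finset.sdiff_subset
        (Finset.nonempty_iff_ne_empty.mpr hxne)
    · intro x hx y hy hne
      obtain ⟨D, hD, rfl⟩ := Finset.mem_image.mp (Finset.mem_of_mem_erase hx)
      obtain ⟨E, hE, rfl⟩ := Finset.mem_image.mp (Finset.mem_of_mem_erase hy)
      have hDE : D ≠ E := fun h => hne (by rw [h])
      exact (hP.2.1 D (Finset.mem_of_mem_erase hD) E (Finset.mem_of_mem_erase hE) hDE).mono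
        Finset.sdiff_subset Finset.sdiff_subset
    · ext a
      rw [Finset.mem_sup, Finset.mem_sdiff]
      constructor
      · rintro ⟨x, hx, hax⟩
        obtain ⟨hxne, hx'⟩ := Finset.mem_erase.mp hx
        obtain ⟨D, hD, rfl⟩ := Finset.mem_image.mp hx'
        simp only [id_eq, Finset.mem_sdiff] at hax
        refine ⟨?_, hax.2⟩
        have : a ∈ P.sup id := Finset.mem_sup.mpr ⟨D, Finset.mem_of_mem_erase hD, hax.1⟩
        rwa [hP.2.2] at this
      · rintro ⟨haA, haM⟩
        have : a ∈ P.sup id := by rw [hP.2.2]; exact haA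
        obtain ⟨D, hDP, haD⟩ := Finset.mem_sup.mp this
        simp only [id_eq] at haD
        have hDC : D ≠ C := fun h => haM (hCM (h ▸ haD))
        refine ⟨D \ M, ?_, Finset.mem_sdiff.mpr ⟨haD, haM⟩⟩
        refine Finset.mem_erase.mpr ⟨?_,
          Finset.mem_image.mpr ⟨D, Finset.mem_erase.mpr ⟨hDC, hDP⟩, rfl⟩⟩
        exact Finset.nonempty_iff_ne_empty.mp ⟨a, Finset.mem_sdiff.mpr ⟨haD, haM⟩⟩
  have h1 : minParts F (A \ M) ≤ Q.card := minParts_le_card hQpart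
  have h2 : Q.card ≤ (P.erase C).card :=
    le_trans (Finset.card_erase_le) (Finset.card_image_le)
  have h3 : (P.erase C).card = P.card - 1 := Finset.card_erase_of_mem hCP
  have h4 : 1 ≤ P.card := Finset.card_pos.mpr ⟨C, hCP⟩
  omega

/-- **Correctness of the BnR branching recursion.**
Let `A` be a nonempty finite set and `F` a downward-closed family of nonempty
subsets of `A` containing all singletons. Then for every `v ∈ A`,
`p(A) = min { 1 + p(A \ M) : M ∈ F, v ∈ M ⊆ A, M maximal among members of F
contained in A }`. -/
theorem bnr_branching_recursion {β : Type*} [DecidableEq β]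
    (A : Finset β) (hA : A.Nonempty) (F : Set (Finset β))
    (hFne : ∀ B ∈ F, B.Nonempty) (hFsub : ∀ B ∈ F, B ⊆ A)
    (hFdc : DownwardClosedFamily F)
    (hFsingle : ∀ a ∈ A, ({a} : Finset β) ∈ F)
    (v : β) (hv : v ∈ A) :
    {t : ℕ | ∃ M : Finset β, M ∈ F ∧ v ∈ M ∧ M ⊆ A ∧
        (¬ ∃ B ∈ F, M ⊂ B ∧ B ⊆ A) ∧ t = 1 + minParts F (A \ M)}.Nonempty ∧
      minParts F A =
        sInf {t : ℕ | ∃ M : Finset β, M ∈ F ∧ v ∈ M ∧ M ⊆ A ∧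
          (¬ ∃ B ∈ F, M ⊂ B ∧ B ⊆ A) ∧ t = 1 + minParts F (A \ M)} := by
  obtain ⟨M, hMF, hvM, hMA, hmax, hle⟩ := lower_bound F A hFsub hFdc hFsingle v hv
  have hne : {t : ℕ | ∃ M : Finset β, M ∈ F ∧ v ∈ M ∧ M ⊆ A ∧
      (¬ ∃ B ∈ F, M ⊂ B ∧ B ⊆ A) ∧ t = 1 + minParts F (A \ M)}.Nonempty :=
    ⟨1 + minParts F (A \ M), M, hMF, hvM, hMA, hmax, rfl⟩
  refine ⟨hne, le_antisymm ?_ ?_⟩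
  · obtain ⟨M', hM'F, _, hM'A, _, heq⟩ := Nat.sInf_mem hne
    rw [heq]
    exact upper_bound F A M' hM'F hM'A hFsingle
  · exact le_trans (Nat.sInf_le ⟨M, hMF, hvM, hMA, hmax, rfl⟩) hle
end
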